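/- Let r ≥ 3 and let G be a finite simple triangle-free graph with maximum degree at most 3 and at least one edge. Then there exists a finite simple graph G′ together with a bijection φ from the vertex set of G onto the set of all r-cliques of G′, such that: (i) for distinct vertices u, v of G, if u and v are adjacent in G then |φ(u) ∩ φ(v)| = ⌊r/3⌋, and if u and v are non-adjacent then φ(u) ∩ φ(v) = ∅; and (ii) the maximum degree of G′ equals ⌈5r/3⌉ − 1. -/

import Mathlib

/-!
Give every edge `uv` of `G` a block of `⌊r/3⌋` new vertices and every vertex `u` a block of
`r - deg(u)⌊r/3⌋` private ones (nonnegative because `Δ(G) ≤ 3`); `φ(u)` is the union of the blocks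
at `u`, and `G'` is the union of the cliques on the sets `φ(u)`. Two sets `φ(u)`, `φ(v)` meet
exactly when `uv` is an edge, so since `G` is triangle-free no three of them pairwise meet. Hence
every clique of `G'` with two vertices lies inside one `φ(u)`, and the neighbourhood of a vertex
of `G'` is contained in `φ(u) ∪ φ(v)` for an edge `uv`, of size `2r - ⌊r/3⌋ = ⌈5r/3⌉`, with
equality on edge blocks.
-/

open Finset

namespace SimpleGraph

variable {ι W : Type*}

def cliqueUnion (φ : ι → Finset W) : SimpleGraph W :=
  fromRel fun x y => ∃ i, x ∈ φ i ∧ y ∈ φ i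

def intersectionGraph (φ : ι → Finset W) : SimpleGraph ι where
  Adj i j := i ≠ j ∧ ¬Disjoint (φ i) (φ j)
  symm := ⟨fun _ _ ⟨hij, h⟩ => ⟨hij.symm, by rwa [disjoint_comm]⟩⟩
  loopless := ⟨fun _ h => h.1 rfl⟩

theorem CliqueFree.not_adj_of_adj_of_adj {G : SimpleGraph ι} (h3 : G.CliqueFree 3) {i j l : ι}
    (hij : G.Adj i j) (hjl : G.Adj j l) : ¬G.Adj i l := fun hil => by
  classical
  exact h3 {i, j, l} (is3Clique_triple_iff.2 ⟨hij, hil, hjl⟩)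

section cliqueUnion

variable (φ : ι → Finset W)

theorem cliqueUnion_adj {x y : W} :
    (cliqueUnion φ).Adj x y ↔ x ≠ y ∧ ∃ i, x ∈ φ i ∧ y ∈ φ i := by
  rw [cliqueUnion, fromRel_adj]
  exact and_congr_right fun _ => or_iff_left_of_imp fun ⟨i, hy, hx⟩ => ⟨i, hx, hy⟩

theorem isClique_cliqueUnion (i : ι) : (cliqueUnion φ).IsClique (φ i : Set W) :=
  fun _ hx _ hy hxy => (cliqueUnion_adj φ).2 ⟨hxy, i, hx, hy⟩

theorem intersectionGraph_adj_of_mem {i j : ι} {x : W} (hij : i ≠ j) (hi : x ∈ φ i)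
    (hj : x ∈ φ j) : (intersectionGraph φ).Adj i j :=
  ⟨hij, not_disjoint_iff.2 ⟨x, hi, hj⟩⟩

variable {φ}

theorem exists_subset_of_isClique (h3 : (intersectionGraph φ).CliqueFree 3) {s : Set W}
    (hs : (cliqueUnion φ).IsClique s) (hs2 : s.Nontrivial) : ∃ i, s ⊆ φ i := by
  by_contra! hnot
  obtain ⟨x, hx, y, hy, hxy⟩ := hs2
  obtain ⟨-, i, hxi, -⟩ := (cliqueUnion_adj φ).1 (hs hx hy hxy)
  obtain ⟨a, ha, hai⟩ := Set.not_subset.1 (hnot i)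
  obtain ⟨-, j, hxj, haj⟩ := (cliqueUnion_adj φ).1 (hs hx ha (by rintro rfl; exact hai hxi))
  have hij : i ≠ j := by rintro rfl; exact hai haj
  obtain ⟨b, hb, hbj⟩ := Set.not_subset.1 (hnot j)
  obtain ⟨-, l, hxl, hbl⟩ := (cliqueUnion_adj φ).1 (hs hx hb (by rintro rfl; exact hbj hxj))
  obtain rfl : l = i := by
    by_contra hli
    exact h3.not_adj_of_adj_of_adj (intersectionGraph_adj_of_mem φ hij hxi hxj)
      (intersectionGraph_adj_of_mem φ (by rintro rfl; exact hbj hbl) hxj hxl)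
      (intersectionGraph_adj_of_mem φ (Ne.symm hli) hxi hxl)
  obtain ⟨-, m, ham, hbm⟩ := (cliqueUnion_adj φ).1 (hs ha hb (by rintro rfl; exact hai hbl))
  exact h3.not_adj_of_adj_of_adj (intersectionGraph_adj_of_mem φ hij hxi hxj)
    (intersectionGraph_adj_of_mem φ (by rintro rfl; exact hbj hbm) haj ham)
    (intersectionGraph_adj_of_mem φ (by rintro rfl; exact hai ham) hbl hbm)

theorem isNClique_cliqueUnion_iff (h3 : (intersectionGraph φ).CliqueFree 3) {r : ℕ}
    (hcard : ∀ i, #(φ i) = r) (hr : 2 ≤ r) {K : Finset W} :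
    (cliqueUnion φ).IsNClique r K ↔ ∃ i, φ i = K := by
  constructor
  · intro hK
    obtain ⟨i, hi⟩ := exists_subset_of_isClique h3 hK.isClique
      (one_lt_card_iff_nontrivial.1 (by rw [hK.card_eq]; omega))
    exact ⟨i, (eq_of_subset_of_card_le hi (by rw [hK.card_eq, hcard])).symm⟩
  · rintro ⟨i, rfl⟩
    exact ⟨isClique_cliqueUnion φ i, hcard i⟩

variable [DecidableEq W]

theorem neighborSet_cliqueUnion {x : W} {s : Finset ι} (hs : ∀ i, x ∈ φ i ↔ i ∈ s) :
    (cliqueUnion φ).neighborSet x = ↑((s.biUnion φ).erase x) := by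
  ext y
  simp only [mem_neighborSet, cliqueUnion_adj, coe_erase, Set.mem_sdiff, mem_coe, mem_biUnion,
    Set.mem_singleton_iff, ← hs]
  grind

theorem ncard_neighborSet_cliqueUnion {x : W} {s : Finset ι} (hs : ∀ i, x ∈ φ i ↔ i ∈ s) :
    ((cliqueUnion φ).neighborSet x).ncard = #(s.biUnion φ) - 1 := by
  rw [neighborSet_cliqueUnion hs, Set.ncard_coe_finset]
  obtain rfl | ⟨i, hi⟩ := s.eq_empty_or_nonempty
  · simp
  · exact card_erase_of_mem (mem_biUnion.2 ⟨i, hi, (hs i).2 hi⟩)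

variable (h3 : (intersectionGraph φ).CliqueFree 3) {r k : ℕ} (hcard : ∀ i, #(φ i) = r)
  (hinter : ∀ i j, (intersectionGraph φ).Adj i j → #(φ i ∩ φ j) = k)
include h3 hcard hinter

theorem ncard_neighborSet_cliqueUnion_of_mem_of_mem {x : W} {i j : ι} (hij : i ≠ j)
    (hi : x ∈ φ i) (hj : x ∈ φ j) :
    ((cliqueUnion φ).neighborSet x).ncard = 2 * r - k - 1 := by
  classical
  have hadj := intersectionGraph_adj_of_mem φ hij hi hj
  have howners : ∀ l, x ∈ φ l ↔ l ∈ ({i, j} : Finset ι) := by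
    refine fun l => ⟨fun hl => ?_, ?_⟩
    · by_contra hlij
      simp only [mem_insert, mem_singleton, not_or] at hlij
      exact h3.not_adj_of_adj_of_adj hadj (intersectionGraph_adj_of_mem φ (Ne.symm hlij.2) hj hl)
        (intersectionGraph_adj_of_mem φ (Ne.symm hlij.1) hi hl)
    · simp only [mem_insert, mem_singleton]
      rintro (rfl | rfl) <;> assumption
  have hunion := card_union_add_card_inter (φ i) (φ j)
  have hk : k ≤ r := hinter i j hadj ▸ hcard i ▸ card_le_card inter_subset_left
  rw [ncard_neighborSet_cliqueUnion howners, biUnion_insert, singleton_biUnion]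
  rw [hcard, hcard, hinter i j hadj] at hunion
  omega

theorem ncard_neighborSet_cliqueUnion_le (hk : k ≤ r) (x : W) :
    ((cliqueUnion φ).neighborSet x).ncard ≤ 2 * r - k - 1 := by
  classical
  by_cases htwo : ∃ i j, i ≠ j ∧ x ∈ φ i ∧ x ∈ φ j
  · obtain ⟨i, j, hij, hi, hj⟩ := htwo
    exact (ncard_neighborSet_cliqueUnion_of_mem_of_mem h3 hcard hinter hij hi hj).le
  push Not at htwo
  by_cases hone : ∃ i, x ∈ φ i
  · obtain ⟨i, hi⟩ := hone
    have howners : ∀ l, x ∈ φ l ↔ l ∈ ({i} : Finset ι) := fun l =>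
      ⟨fun hl => mem_singleton.2 (by_contra fun hli => htwo l i hli hl hi),
        fun hl => mem_singleton.1 hl ▸ hi⟩
    rw [ncard_neighborSet_cliqueUnion howners, singleton_biUnion, hcard]
    omega
  · push Not at hone
    rw [ncard_neighborSet_cliqueUnion (s := ∅) (by simpa using hone)]
    simp

end cliqueUnion

theorem Iso.ncard_neighborSet {V V' : Type*} {G : SimpleGraph V} {G' : SimpleGraph V'}
    (f : G ≃g G') (x : V) : (G'.neighborSet (f x)).ncard = (G.neighborSet x).ncard :=
  Set.ncard_congr' (f.mapNeighborSet x).symm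

end SimpleGraph

open SimpleGraph

section cliqueBlocks

variable {V : Type*} [Fintype V] [DecidableEq V] (G : SimpleGraph V) [DecidableRel G.Adj]
  (r : ℕ)

/-- Unused copies in `Sym2 V × Fin (r / 3) ⊕ V × Fin r` (non-edges, surplus private copies)
become isolated vertices of `G'`. -/
def cliqueBlocks (u : V) : Finset (Sym2 V × Fin (r / 3) ⊕ V × Fin r) :=
  (G.incidenceFinset u ×ˢ univ).disjSum
    ({u} ×ˢ ({i | i < r - G.degree u * (r / 3)} : Finset (Fin r)))

variable {G r}

theorem inl_mem_cliqueBlocks {e : Sym2 V} {i : Fin (r / 3)} {u : V} :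
    .inl (e, i) ∈ cliqueBlocks G r u ↔ e ∈ G.incidenceSet u := by
  simp [cliqueBlocks]

theorem card_cliqueBlocks (hΔ : G.maxDegree ≤ 3) (u : V) : #(cliqueBlocks G r u) = r := by
  have hdeg : G.degree u * (r / 3) ≤ 3 * (r / 3) :=
    Nat.mul_le_mul_right _ ((G.degree_le_maxDegree u).trans hΔ)
  simp only [cliqueBlocks, card_disjSum, card_product, card_incidenceFinset_eq_degree, card_univ,
    Fintype.card_fin, card_singleton, Fin.card_filter_val_lt]
  omega

theorem cliqueBlocks_inter {u v : V} (huv : u ≠ v) :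
    cliqueBlocks G r u ∩ cliqueBlocks G r v =
      ((G.incidenceFinset u ∩ G.incidenceFinset v) ×ˢ univ).disjSum ∅ := by
  ext (⟨e, i⟩ | ⟨w, i⟩) <;> simp [cliqueBlocks]
  grind

theorem card_cliqueBlocks_inter_of_adj {u v : V} (h : G.Adj u v) :
    #(cliqueBlocks G r u ∩ cliqueBlocks G r v) = r / 3 := by
  have hinc : G.incidenceFinset u ∩ G.incidenceFinset v = {s(u, v)} := by
    rw [← coe_inj]
    push_cast
    exact G.incidenceSet_inter_incidenceSet_of_adj h
  simp [cliqueBlocks_inter h.ne, hinc]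

theorem cliqueBlocks_inter_of_not_adj {u v : V} (huv : u ≠ v) (h : ¬G.Adj u v) :
    cliqueBlocks G r u ∩ cliqueBlocks G r v = ∅ := by
  have hinc : G.incidenceFinset u ∩ G.incidenceFinset v = ∅ := by
    rw [← coe_inj]
    push_cast
    exact G.incidenceSet_inter_incidenceSet_of_not_adj h huv
  simp [cliqueBlocks_inter huv, hinc]

theorem intersectionGraph_cliqueBlocks_le : intersectionGraph (cliqueBlocks G r) ≤ G :=
  fun u v ⟨huv, hmeet⟩ => by
    by_contra h
    exact hmeet (disjoint_iff_inter_eq_empty.2 (cliqueBlocks_inter_of_not_adj huv h))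

theorem cliqueBlocks_injective (hΔ : G.maxDegree ≤ 3) (hr : 0 < r) :
    Function.Injective (cliqueBlocks G r) := by
  intro u v huv
  by_contra hne
  have hself : #(cliqueBlocks G r u ∩ cliqueBlocks G r v) = r := by
    rw [huv, inter_self, card_cliqueBlocks hΔ]
  by_cases h : G.Adj u v
  · rw [card_cliqueBlocks_inter_of_adj h] at hself
    omega
  · rw [cliqueBlocks_inter_of_not_adj hne h, card_empty] at hself
    omega

end cliqueBlocks

/-- For `r ≥ 3` and a finite simple triangle-free graph `G` of maximum degree at most `3`
with at least one edge, there is a finite simple graph `G'` and a bijection `φ` from the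
vertices of `G` onto the set of all `r`-cliques of `G'` such that cliques of adjacent
vertices intersect in exactly `⌊r/3⌋` vertices, cliques of non-adjacent vertices are
disjoint, and the maximum degree of `G'` is exactly `⌈5r/3⌉ - 1`. -/
theorem stmt4 {V : Type*} [Fintype V] [DecidableEq V] (G : SimpleGraph V)
    [DecidableRel G.Adj] (r : ℕ) (hr : 3 ≤ r)
    (htf : G.CliqueFree 3) (hΔ : G.maxDegree ≤ 3) (hedge : ∃ u v : V, G.Adj u v) :
    ∃ (N : ℕ) (G' : SimpleGraph (Fin N)) (φ : V → Finset (Fin N)),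
      Function.Injective φ ∧
      (∀ K : Finset (Fin N), G'.IsNClique r K ↔ ∃ u : V, φ u = K) ∧
      (∀ u v : V, u ≠ v → G.Adj u v → (φ u ∩ φ v).card = r / 3) ∧
      (∀ u v : V, u ≠ v → ¬ G.Adj u v → φ u ∩ φ v = ∅) ∧
      (∀ w : Fin N, (G'.neighborSet w).ncard ≤ (5 * r + 2) / 3 - 1) ∧
      (∃ w : Fin N, (G'.neighborSet w).ncard = (5 * r + 2) / 3 - 1) := by
  obtain ⟨u, v, huv⟩ := hedge
  have h3 : (intersectionGraph (cliqueBlocks G r)).CliqueFree 3 :=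
    htf.anti intersectionGraph_cliqueBlocks_le
  have hcard := card_cliqueBlocks (r := r) hΔ
  have hinter : ∀ u v, (intersectionGraph (cliqueBlocks G r)).Adj u v →
      #(cliqueBlocks G r u ∩ cliqueBlocks G r v) = r / 3 :=
    fun u v h => card_cliqueBlocks_inter_of_adj (intersectionGraph_cliqueBlocks_le h)
  have hdeg : (5 * r + 2) / 3 - 1 = 2 * r - r / 3 - 1 := by omega
  let e := Fintype.equivFin (Sym2 V × Fin (r / 3) ⊕ V × Fin r)
  have hncard := (Iso.map e (cliqueUnion (cliqueBlocks G r))).ncard_neighborSet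
  refine ⟨_, (cliqueUnion (cliqueBlocks G r)).map e.toEmbedding,
    fun u => (cliqueBlocks G r u).map e.toEmbedding,
    (Finset.map_injective _).comp (cliqueBlocks_injective hΔ (by omega)), fun K => ?_,
    fun _ _ _ h => ?_, fun _ _ hne h => ?_, fun w => ?_,
    ⟨e (.inl (s(u, v), ⟨0, by omega⟩)), ?_⟩⟩
  · simp_rw [isNClique_map_iff (by omega : 1 < r), isNClique_cliqueUnion_iff h3 hcard (by omega),
      exists_exists_eq_and]
  · rw [← map_inter, card_map, card_cliqueBlocks_inter_of_adj h]
  · rw [← map_inter, cliqueBlocks_inter_of_not_adj hne h, map_empty]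
  · obtain ⟨x, rfl⟩ := e.surjective w
    rw [hdeg]
    exact (hncard x).trans_le
      (ncard_neighborSet_cliqueUnion_le h3 hcard hinter (Nat.div_le_self r 3) x)
  · rw [hdeg]
    exact (hncard _).trans (ncard_neighborSet_cliqueUnion_of_mem_of_mem h3 hcard hinter huv.ne
      (inl_mem_cliqueBlocks.2 (G.mk'_mem_incidenceSet_left_iff.2 huv))
      (inl_mem_cliqueBlocks.2 (G.mk'_mem_incidenceSet_right_iff.2 huv)))
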